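/- For all integers n ≥ 1 and a ≥ 1: ∑_{w ∈ S_n, sgn(w)=1} C(n + a - des(w) - 1, n) = (a^n + a^{⌈n/2⌉})/2. -/

import Mathlib

open scoped Classical

/-- Number of descents of a permutation of `{0,…,n-1}`. -/
noncomputable def desA {n : ℕ} (w : Equiv.Perm (Fin n)) : ℕ :=
  ((Finset.range (n - 1)).filter (fun i =>
    ∃ h : i + 1 < n, w ⟨i + 1, h⟩ < w ⟨i, Nat.lt_of_succ_lt h⟩)).card

/-- Number of inversions of a permutation. -/
noncomputable def invA {n : ℕ} (w : Equiv.Perm (Fin n)) : ℕ :=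
  (Finset.univ.filter (fun p : Fin n × Fin n => p.1 < p.2 ∧ w p.2 < w p.1)).card

/-!
Sorting `f : Fin n → Fin a` stably writes it uniquely as `c ∘ w⁻¹` with `w = Tuple.sort f` and
`c` weakly increasing, strictly at the descents of `w`. Subtracting from `c i` the number of
descents before `i` and adding `i` turns such `c` into strictly increasing maps into
`Fin (n + a - des w - 1)`, so each `w` is hit by `C(n + a - des w - 1, n)` maps. Counting gives
`∑ C = a ^ n`. Weighting each `f` by `(-1) ^ (inversions of f)`, which equals `sgn w`, gives
`∑ sgn w * C = ∑_f (-1) ^ inv f`, and the latter is `a ^ ⌈n/2⌉`: summing out the first two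
values of `f` multiplies by `a`, since the terms with distinct values cancel in pairs.
Averaging the two identities gives the sum over even permutations.
-/

open Finset Equiv

lemma sum_fun_fin_succ {α M : Type*} [Fintype α] [AddCommMonoid M] {m : ℕ}
    (F : (Fin (m + 1) → α) → M) : ∑ f, F f = ∑ x, ∑ g, F (Fin.cons x g) := by
  rw [← (Fin.consEquiv fun _ => α).sum_comp, Fintype.sum_prod_type]
  rfl

section InversionSign

variable {α β : Type*} [LinearOrder α] [LinearOrder β] {m : ℕ}

def inversionSign (f : Fin m → α) : ℤ :=
  ∏ j, ∏ i, if i < j ∧ f j < f i then -1 else 1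

lemma inversionSign_congr {f : Fin m → α} {g : Fin m → β}
    (h : ∀ i j, i < j → (f j < f i ↔ g j < g i)) : inversionSign f = inversionSign g := by
  unfold inversionSign
  refine prod_congr rfl fun j _ => prod_congr rfl fun i _ => ?_
  by_cases hij : i < j
  · simp [hij, h i j hij]
  · simp [hij]

lemma sign_eq_inversionSign (σ : Perm (Fin m)) : (Perm.sign σ : ℤ) = inversionSign σ := by
  rw [σ.sign_eq_prod_prod_Iio, Units.coe_prod, inversionSign]
  refine prod_congr rfl fun j _ => ?_
  rw [Units.coe_prod, ← Fintype.prod_ite_mem]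
  refine prod_congr rfl fun i _ => ?_
  by_cases hij : i < j
  · rcases lt_or_gt_of_ne (σ.injective.ne hij.ne) with h | h <;> simp [hij, h, h.not_gt]
  · simp [hij]

lemma inversionSign_cons (x : α) (g : Fin m → α) :
    inversionSign (Fin.cons x g : Fin (m + 1) → α) =
      (∏ j, if g j < x then -1 else 1) * inversionSign g := by
  simp only [inversionSign, Fin.prod_univ_succ, Fin.cons_zero, Fin.cons_succ, Fin.succ_pos,
    Fin.succ_lt_succ_iff, Fin.not_lt_zero, false_and, if_false, true_and, prod_const_one,
    one_mul, ← prod_mul_distrib]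

lemma sum_sum_ite_lt_mul [Fintype α] (s : α → ℤ) :
    ∑ x, ∑ y, (if y < x then -1 else 1) * (s x * s y) = ∑ x, s x * s x := by
  -- the terms of `(x, y)` and `(y, x)` cancel unless `x = y`
  have hsym : ∀ x y : α, (if y < x then (-1 : ℤ) else 1) + (if x < y then -1 else 1) =
      if x = y then 2 else 0 := by
    intro x y
    rcases lt_trichotomy x y with h | rfl | h
    · simp [h, h.ne, not_lt_of_gt h]
    · simp
    · simp [h, h.ne', not_lt_of_gt h]
  have h2 : 2 * ∑ x, ∑ y, (if y < x then -1 else 1) * (s x * s y) = 2 * ∑ x, s x * s x :=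
    calc 2 * ∑ x, ∑ y, (if y < x then -1 else 1) * (s x * s y)
        = ∑ x, ∑ y, (if y < x then -1 else 1) * (s x * s y) +
            ∑ x, ∑ y, (if x < y then -1 else 1) * (s x * s y) := by
          rw [two_mul, sum_comm (f := fun x y => (if x < y then -1 else 1) * (s x * s y))]
          simp only [mul_comm (s _) (s _)]
      _ = ∑ x, ∑ y, if x = y then 2 * (s x * s y) else 0 := by
          simp only [← sum_add_distrib]
          refine sum_congr rfl fun x _ => sum_congr rfl fun y _ => ?_
          rw [← add_mul, hsym]
          split_ifs <;> ring
      _ = 2 * ∑ x, s x * s x := by simp [mul_sum]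
  omega

theorem sum_inversionSign [Fintype α] :
    ∀ m, ∑ f : Fin m → α, inversionSign f = Fintype.card α ^ ((m + 1) / 2)
  | 0 => by simp [inversionSign]
  | 1 => by simp [inversionSign]
  | m + 2 => by
    set s : (Fin m → α) → α → ℤ := fun g x => ∏ j, if g j < x then -1 else 1
    have hs : ∀ g x, s g x * s g x = 1 := fun g x => by
      rw [← prod_mul_distrib]; exact prod_eq_one fun j _ => by split_ifs <;> rfl
    calc ∑ f : Fin (m + 2) → α, inversionSign f
        = ∑ g : Fin m → α, ∑ x, ∑ y,
            (if y < x then -1 else 1) * (s g x * s g y) * inversionSign g := by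
          simp only [sum_fun_fin_succ, inversionSign_cons, Fin.prod_univ_succ, Fin.cons_zero,
            Fin.cons_succ]
          symm
          rw [sum_comm]
          refine sum_congr rfl fun x _ => ?_
          rw [sum_comm]
          exact sum_congr rfl fun y _ => sum_congr rfl fun g _ => by ring
      _ = ∑ g : Fin m → α, Fintype.card α * inversionSign g := by
          simp only [← sum_mul, sum_sum_ite_lt_mul, hs, sum_const, card_univ, nsmul_one]
      _ = Fintype.card α ^ ((m + 2 + 1) / 2) := by
          rw [← mul_sum, sum_inversionSign m, ← pow_succ']
          congr 1; omega

end InversionSign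

section Compatible

variable {α : Type*} [LinearOrder α] {n : ℕ}

def Compatible (w : Perm (Fin n)) (c : Fin n → α) : Prop :=
  StrictMono fun i => toLex (c i, w i)

lemma sort_eq_iff_compatible (w : Perm (Fin n)) (f : Fin n → α) :
    Tuple.sort f = w ↔ Compatible w (f ∘ w) := by
  rw [eq_comm, Tuple.eq_sort_iff']
  rfl

def sortEquiv : (Fin n → α) ≃ Σ w : Perm (Fin n), {c : Fin n → α // Compatible w c} where
  toFun f := ⟨Tuple.sort f, f ∘ Tuple.sort f, (sort_eq_iff_compatible _ f).1 rfl⟩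
  invFun p := p.2.1 ∘ p.1.symm
  left_inv f := by ext; simp
  right_inv := by
    rintro ⟨w, c, hc⟩
    have hw : Tuple.sort (c ∘ w.symm) = w := by
      rw [sort_eq_iff_compatible]; simpa [Function.comp_def] using hc
    exact Sigma.subtype_ext hw (by ext; simp [hw])

lemma sum_eq_sum_sum_compatible {M : Type*} [AddCommMonoid M] [Fintype α]
    (F : (Fin n → α) → M) :
    ∑ f, F f = ∑ w : Perm (Fin n), ∑ c : {c : Fin n → α // Compatible w c}, F (c.1 ∘ w.symm) := by
  rw [← sortEquiv.symm.sum_comp, Fintype.sum_sigma]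
  rfl

lemma Compatible.lt_iff {w : Perm (Fin n)} {c : Fin n → α} (hc : Compatible w c) {u v : Fin n}
    (hw : w u < w v) : c v < c u ↔ v < u := by
  rw [← hc.lt_iff_lt, Prod.Lex.toLex_lt_toLex]
  simp [hw.not_gt]

lemma Compatible.inversionSign_comp_symm {w : Perm (Fin n)} {c : Fin n → α}
    (hc : Compatible w c) :
    inversionSign (c ∘ w.symm) = Perm.sign w := by
  rw [← Perm.sign_symm, sign_eq_inversionSign]
  exact inversionSign_congr fun x y hxy => hc.lt_iff (by simpa using hxy)

end Compatible

lemma Fin.val_le_of_strictMono {k M : ℕ} {d : Fin k → Fin M} (hd : StrictMono d) (i : Fin k) :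
    (i : ℕ) ≤ d i := by
  obtain ⟨i, hi⟩ := i
  induction i with
  | zero => exact Nat.zero_le _
  | succ i ih =>
    have : d ⟨i, by omega⟩ < d ⟨i + 1, hi⟩ := hd (Fin.mk_lt_mk.2 (Nat.lt_succ_self i))
    exact Nat.succ_le_of_lt ((ih (by omega)).trans_lt this)

lemma card_strictMono_fin (k M : ℕ) :
    Nat.card {d : Fin k → Fin M // StrictMono d} = M.choose k := by
  let e : {d : Fin k → Fin M // StrictMono d} ≃ (Fin k ↪o Fin M) :=
    { toFun := fun d => OrderEmbedding.ofStrictMono d.1 d.2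
      invFun := fun f => ⟨f, f.strictMono⟩
      left_inv := fun _ => rfl
      right_inv := fun _ => rfl }
  rw [Nat.card_congr (e.trans Set.powersetCard.ofFinEmbEquiv), Set.powersetCard.card,
    Nat.card_eq_fintype_card, Fintype.card_fin]

lemma monotone_unshift {D : ℕ → ℕ} (hD : Monotone D) {k M : ℕ} {d : Fin (k + 1) → Fin M}
    (hd : StrictMono d) : Monotone fun i : Fin (k + 1) => (d i : ℕ) + D i - i := by
  refine Fin.monotone_iff_le_succ.2 fun i => ?_
  have h1 : (i : ℕ) ≤ d i.castSucc := Fin.val_le_of_strictMono hd i.castSucc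
  have h2 : (d i.castSucc : ℕ) < d i.succ := hd i.castSucc_lt_succ
  have h3 : D i ≤ D (i + 1) := hD (Nat.le_succ i)
  simp only [Fin.val_castSucc, Fin.val_succ]
  omega

def shiftEquiv (D : ℕ → ℕ) (k a : ℕ) (hD : Monotone D) (hDle : ∀ i, D i ≤ i) :
    {c : Fin (k + 1) → Fin a // StrictMono fun i => (c i : ℕ) + i - D i} ≃
      {d : Fin (k + 1) → Fin (k + a - D k) // StrictMono d} where
  toFun c := ⟨fun i => ⟨c.1 i + i - D i, by
      have := c.2.monotone (Fin.le_last i)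
      have := (c.1 (Fin.last k)).isLt
      have := hDle k
      simp only [Fin.val_last] at *
      omega⟩, fun i j hij => c.2 hij⟩
  invFun d := ⟨fun i => ⟨d.1 i + D i - i, by
      have := monotone_unshift hD d.2 (Fin.le_last i)
      have := (d.1 (Fin.last k)).isLt
      have := Fin.val_le_of_strictMono d.2 (Fin.last k)
      have := hDle k
      simp only [Fin.val_last] at *
      omega⟩, fun i j hij => by
      have := Fin.val_le_of_strictMono d.2 i
      have := Fin.val_le_of_strictMono d.2 j
      have := d.2 hij
      simp only [Fin.lt_def] at *
      omega⟩
  left_inv c := by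
    ext i
    have := hDle i
    dsimp only
    omega
  right_inv d := by
    ext i
    have := Fin.val_le_of_strictMono d.2 i
    dsimp only
    omega

section Descents

variable {n : ℕ}

noncomputable def descentsBefore (w : Perm (Fin n)) (k : ℕ) : ℕ :=
  #{i ∈ range k | ∃ h : i + 1 < n, w ⟨i + 1, h⟩ < w ⟨i, Nat.lt_of_succ_lt h⟩}

lemma desA_eq_descentsBefore (w : Perm (Fin n)) : desA w = descentsBefore w (n - 1) := rfl

lemma descentsBefore_le (w : Perm (Fin n)) (k : ℕ) : descentsBefore w k ≤ k :=
  (card_filter_le _ _).trans (card_range k).le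

lemma descentsBefore_mono (w : Perm (Fin n)) : Monotone (descentsBefore w) :=
  fun _ _ h => card_le_card (filter_subset_filter _ (range_subset_range.2 h))

lemma descentsBefore_succ {m : ℕ} (w : Perm (Fin (m + 1))) (i : Fin m) :
    descentsBefore w (i + 1) = descentsBefore w i + if w i.succ < w i.castSucc then 1 else 0 := by
  have hdes : (∃ h : (i : ℕ) + 1 < m + 1, w ⟨i + 1, h⟩ < w ⟨i, Nat.lt_of_succ_lt h⟩) ↔
      w i.succ < w i.castSucc := ⟨fun ⟨_, h⟩ => h, fun h => ⟨by omega, h⟩⟩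
  rw [descentsBefore, range_add_one, filter_insert]
  by_cases h : w i.succ < w i.castSucc
  · rw [if_pos (hdes.2 h), if_pos h, card_insert_of_notMem (by simp)]; rfl
  · rw [if_neg (mt hdes.1 h), if_neg h]; rfl

lemma compatible_iff_strictMono_shift {m a : ℕ} (w : Perm (Fin (m + 1)))
    (c : Fin (m + 1) → Fin a) :
    Compatible w c ↔ StrictMono fun i : Fin (m + 1) => (c i : ℕ) + i - descentsBefore w i := by
  rw [Compatible, Fin.strictMono_iff_lt_succ, Fin.strictMono_iff_lt_succ]
  refine forall_congr' fun i => ?_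
  have hne : w i.castSucc ≠ w i.succ := w.injective.ne i.castSucc_lt_succ.ne
  have hle := descentsBefore_le w i
  simp only [Prod.Lex.toLex_lt_toLex, Fin.val_castSucc, Fin.val_succ, descentsBefore_succ,
    Fin.lt_def, Fin.ext_iff]
  split_ifs <;> omega

end Descents

theorem card_compatible {n : ℕ} (w : Perm (Fin n)) (a : ℕ) :
    Nat.card {c : Fin n → Fin a // Compatible w c} = (n + a - desA w - 1).choose n := by
  cases n with
  | zero =>
    have : Unique {c : Fin 0 → Fin a // Compatible w c} :=
      ⟨⟨⟨Fin.elim0, fun i => i.elim0⟩⟩, fun c => Subtype.ext (funext fun i => i.elim0)⟩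
    simp
  | succ m =>
    have hdes : desA w = descentsBefore w m := desA_eq_descentsBefore w
    rw [Nat.card_congr ((subtypeEquivRight (compatible_iff_strictMono_shift w)).trans
      (shiftEquiv _ m a (descentsBefore_mono w) (descentsBefore_le w))), card_strictMono_fin, hdes]
    congr 1
    omega

theorem sum_choose_desA (n a : ℕ) :
    ∑ w : Perm (Fin n), (n + a - desA w - 1).choose n = a ^ n := by
  have := sum_eq_sum_sum_compatible (fun _ : Fin n → Fin a => 1)
  simp only [sum_const, card_univ, Fintype.card_fun, Fintype.card_fin, smul_eq_mul, mul_one] at this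
  simp only [this, ← card_compatible, Nat.card_eq_fintype_card]

theorem sum_sign_mul_choose_desA (n a : ℕ) :
    ∑ w : Perm (Fin n), (Perm.sign w : ℤ) * (n + a - desA w - 1).choose n = a ^ ((n + 1) / 2) := by
  have := sum_eq_sum_sum_compatible (inversionSign : (Fin n → Fin a) → ℤ)
  rw [sum_inversionSign, Fintype.card_fin] at this
  rw [this]
  refine sum_congr rfl fun w _ => ?_
  rw [sum_congr rfl fun c _ => c.2.inversionSign_comp_symm, sum_const, card_univ,
    ← card_compatible, Nat.card_eq_fintype_card, nsmul_eq_mul, mul_comm]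

theorem even_perm_binomial_sum_general (n a : ℕ) :
    (∑ w ∈ Finset.univ.filter (fun w : Equiv.Perm (Fin n) => Equiv.Perm.sign w = 1),
        (Nat.choose (n + a - desA w - 1) n : ℚ))
      = ((a : ℚ) ^ n + (a : ℚ) ^ ((n + 1) / 2)) / 2 := by
  have h1 := congrArg (Nat.cast : ℕ → ℚ) (sum_choose_desA n a)
  have h2 := congrArg (Int.cast : ℤ → ℚ) (sum_sign_mul_choose_desA n a)
  push_cast at h1 h2
  rw [← h1, ← h2, sum_filter, eq_div_iff two_ne_zero, sum_mul, ← sum_add_distrib]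
  refine sum_congr rfl fun w _ => ?_
  rcases Int.units_eq_one_or (Perm.sign w) with h | h
  · simp [h]; ring
  · simp [h]

theorem even_perm_binomial_sum (n a : ℕ) (hn : 1 ≤ n) (ha : 1 ≤ a) :
    (∑ w ∈ Finset.univ.filter (fun w : Equiv.Perm (Fin n) => Equiv.Perm.sign w = 1),
        (Nat.choose (n + a - desA w - 1) n : ℚ))
      = ((a : ℚ) ^ n + (a : ℚ) ^ ((n + 1) / 2)) / 2 :=
  even_perm_binomial_sum_general n a
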